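/- Let g be an invertible real 3×3 matrix such that for every symmetric traceless 3×3 matrix Q, the matrix g Q gᵀ is also traceless. Then there exist a real number λ > 0 and an orthogonal matrix R such that g = λ R. -/

import Mathlib

/-!
Taking for `Q` the traceless part of the Gram matrix `A = gᵀ g` gives
`0 = tr (g Q gᵀ) = tr (A Q) = tr (Qᵀ Q)`, so `Q = 0` and `A` is a scalar matrix `μ • 1`.
As `A` is positive semidefinite and nonzero, `μ > 0`, and `g = √μ • (√μ⁻¹ • g)` with the second
factor orthogonal.
-/

open Matrix

namespace Matrix

variable {n : Type*} [Fintype n] [DecidableEq n]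

theorem trace_sub_trace_div_card_smul_one [Nonempty n] (A : Matrix n n ℝ) :
    (A - (A.trace / Fintype.card n) • (1 : Matrix n n ℝ)).trace = 0 := by
  rw [trace_sub, trace_smul, trace_one, smul_eq_mul, div_mul_cancel₀ _ (by positivity), sub_self]

theorem transpose_mul_self_eq_smul_one_of_trace_conj_eq_zero [Nonempty n] {g : Matrix n n ℝ}
    (h : ∀ Q : Matrix n n ℝ, Q.IsSymm → Q.trace = 0 → (g * Q * gᵀ).trace = 0) :
    gᵀ * g = ((gᵀ * g).trace / Fintype.card n) • 1 := by
  set A := gᵀ * g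
  set c := A.trace / Fintype.card n
  set Q := A - c • (1 : Matrix n n ℝ) with hQ
  have hQsymm : Q.IsSymm := (isSymm_transpose_mul_self g).sub (isSymm_one.smul c)
  have hQtr : Q.trace = 0 := trace_sub_trace_div_card_smul_one A
  have hAQ : A * Q = Qᵀ * Q + c • Q := by
    rw [hQsymm.eq, hQ]
    noncomm_ring
  have hQQ : (Qᵀ * Q).trace = 0 := by
    calc (Qᵀ * Q).trace = (A * Q).trace := by
          rw [hAQ, trace_add, trace_smul, hQtr, smul_zero, add_zero]
      _ = (g * Q * gᵀ).trace := by rw [show A * Q = gᵀ * (g * Q) from mul_assoc _ _ _,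
          trace_mul_comm]
      _ = 0 := h Q hQsymm hQtr
  rw [← conjTranspose_eq_transpose_of_trivial, trace_conjTranspose_mul_self_eq_zero_iff] at hQQ
  exact sub_eq_zero.mp hQQ

theorem exists_pos_smul_orthogonal_of_transpose_mul_self_eq_smul_one {g : Matrix n n ℝ} {μ : ℝ}
    (hg : g ≠ 0) (h : gᵀ * g = μ • 1) :
    ∃ (l : ℝ) (R : Matrix n n ℝ), 0 < l ∧ Rᵀ * R = 1 ∧ g = l • R := by
  have htr_pos : 0 < (gᵀ * g).trace := by
    rw [← conjTranspose_eq_transpose_of_trivial]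
    exact (posSemidef_conjTranspose_mul_self g).trace_nonneg.lt_of_ne'
      (trace_conjTranspose_mul_self_eq_zero_iff.not.mpr hg)
  have hμ : 0 < μ := by
    rw [h, trace_smul, trace_one, smul_eq_mul] at htr_pos
    exact pos_of_mul_pos_left htr_pos (Nat.cast_nonneg _)
  have hl : 0 < √μ := Real.sqrt_pos.mpr hμ
  refine ⟨√μ, (√μ)⁻¹ • g, hl, ?_, by rw [smul_smul, mul_inv_cancel₀ hl.ne', one_smul]⟩
  rw [transpose_smul, smul_mul_smul_comm, h, smul_smul, ← mul_inv,
    Real.mul_self_sqrt hμ.le, inv_mul_cancel₀ hμ.ne', one_smul]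

end Matrix

theorem stmt_0 (g : Matrix (Fin 3) (Fin 3) ℝ) (hg : IsUnit g)
    (h : ∀ Q : Matrix (Fin 3) (Fin 3) ℝ, Q.IsSymm → Q.trace = 0 →
      (g * Q * gᵀ).trace = 0) :
    ∃ (l : ℝ) (R : Matrix (Fin 3) (Fin 3) ℝ),
      0 < l ∧ Rᵀ * R = 1 ∧ g = l • R :=
  exists_pos_smul_orthogonal_of_transpose_mul_self_eq_smul_one hg.ne_zero
    (transpose_mul_self_eq_smul_one_of_trace_conj_eq_zero h)
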